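/- Fix a weighted subclass collection T = [G, w] with Λ levels. For any x ∈ X, the truncated error of T at (x, Vote(T,x)) is at most twice the minimum over y ∈ [0,1] of the truncated error of T at (x,y): Σ_v P_w(v)·Terr(G^v_{1:Λ}, x, Vote(T,x)) ≤ 2·min_{y∈[0,1]} Σ_v P_w(v)·Terr(G^v_{1:Λ}, x, y). -/

import Mathlib

/-! Moving the prediction from `y` to the weighted mean `y₁` raises every truncated error
`max |a i - ·| (c i)` by at most `|y₁ - y|`, and by Jensen `|y₁ - y| ≤ Σ p i |a i - y|`, which is
itself at most the weighted truncated error at `y`. -/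

open Finset

lemma max_abs_sub_le_max_abs_sub_add (a c y z : ℝ) :
    max |a - z| c ≤ max |a - y| c + |z - y| := by
  have htri : |a - z| ≤ |a - y| + |z - y| := abs_sub_comm z y ▸ abs_sub_le a y z
  exact max_le (htri.trans (by gcongr; exact le_max_left _ _))
    (le_add_of_le_of_nonneg (le_max_right _ _) (abs_nonneg _))

section WeightedSums

variable {ι : Type*} (s : Finset ι) (p : ι → ℝ)

lemma abs_sum_mul_sub_le_sum_mul_abs_sub (hp : ∀ i ∈ s, 0 ≤ p i) (hsum : ∑ i ∈ s, p i = 1)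
    (a : ι → ℝ) (y : ℝ) :
    |∑ i ∈ s, p i * a i - y| ≤ ∑ i ∈ s, p i * |a i - y| := by
  have hcentre : ∑ i ∈ s, p i * a i - y = ∑ i ∈ s, p i * (a i - y) := by
    simp only [mul_sub, sum_sub_distrib, ← sum_mul, hsum, one_mul]
  rw [hcentre]
  refine (abs_sum_le_sum_abs _ _).trans_eq (sum_congr rfl fun i hi => ?_)
  rw [abs_mul, abs_of_nonneg (hp i hi)]

lemma sum_mul_max_abs_sub_le_add_abs_sub (hp : ∀ i ∈ s, 0 ≤ p i) (hsum : ∑ i ∈ s, p i = 1)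
    (a c : ι → ℝ) (y z : ℝ) :
    ∑ i ∈ s, p i * max |a i - z| (c i) ≤ ∑ i ∈ s, p i * max |a i - y| (c i) + |z - y| :=
  calc ∑ i ∈ s, p i * max |a i - z| (c i)
      ≤ ∑ i ∈ s, p i * (max |a i - y| (c i) + |z - y|) :=
        sum_le_sum fun i hi =>
          mul_le_mul_of_nonneg_left (max_abs_sub_le_max_abs_sub_add _ _ _ _) (hp i hi)
    _ = ∑ i ∈ s, p i * max |a i - y| (c i) + |z - y| := by
        simp only [mul_add, sum_add_distrib, ← sum_mul, hsum, one_mul]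

end WeightedSums

theorem stmt2 {ι : Type*} (s : Finset ι) (p a c : ι → ℝ)
    (hp : ∀ i ∈ s, 0 ≤ p i) (hsum : ∑ i ∈ s, p i = 1) :
    ∀ y ∈ Set.Icc (0:ℝ) 1,
      ∑ i ∈ s, p i * max |a i - (∑ j ∈ s, p j * a j)| (c i)
        ≤ 2 * ∑ i ∈ s, p i * max |a i - y| (c i) := by
  intro y _
  have hshift := sum_mul_max_abs_sub_le_add_abs_sub s p hp hsum a c y (∑ j ∈ s, p j * a j)
  have hmean : |∑ j ∈ s, p j * a j - y| ≤ ∑ i ∈ s, p i * max |a i - y| (c i) :=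
    (abs_sum_mul_sub_le_sum_mul_abs_sub s p hp hsum a y).trans <|
      sum_le_sum fun i hi => mul_le_mul_of_nonneg_left (le_max_left _ _) (hp i hi)
  linarith
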